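/- arXiv:1504.01419 — 3 statements merged into one kernel-verified Lean document; each statement's English description precedes it below -/
import Mathlib

section
/- For the filtration F_j = sigma(epsilon_k : k <= j coordinatewise, k in Z^d) generated by an i.i.d. family {epsilon_k}_{k in Z^d}, the commuting property holds: for any integrable random variable Y measurable with respect to sigma(epsilon_k : k in Z^d) and any j, k in Z^d, E[E(Y | F_j) | F_k] = E[E(Y | F_k) | F_j] = E(Y | F_{j wedge k}), where (j wedge k)_q = min(j_q, k_q) for q = 1,...,d. -/
/-!
Write `F_j` for `sigmaLe ε j`. The index set `{i ≤ k}` splits into `{i ≤ j ∧ k}` and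
`{i ≤ k, i ≰ j}`, so `F_k = F_{j ∧ k} ⊔ G`, where `G` is generated by variables disjoint from
those generating `F_j` and is therefore independent of `F_j`. For an `F_j`-measurable `X`, the
integrals of `X` and of `E(X | F_{j ∧ k})` over `c ∩ d` (`c ∈ F_{j ∧ k}`, `d ∈ G`) both factor as
an integral over `c` times `P(d)`; such sets form a π-system generating `F_{j ∧ k} ⊔ G`, so
`E(X | F_{j ∧ k} ⊔ G) = E(X | F_{j ∧ k})`. Applied to `X = E(Y | F_j)`, the tower property gives
`E(E(Y | F_j) | F_k) = E(Y | F_{j ∧ k})`.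
-/

open MeasureTheory ProbabilityTheory

/-- The σ-algebra `F_j` generated by the variables `ε k` with `k ≤ j` coordinatewise. -/
def sigmaLe {Ω : Type*} [MeasurableSpace Ω] {d : ℕ} (ε : (Fin d → ℤ) → Ω → ℝ)
    (j : Fin d → ℤ) : MeasurableSpace Ω :=
  ⨆ k ∈ {k : Fin d → ℤ | ∀ q, k q ≤ j q}, MeasurableSpace.comap (ε k) inferInstance

section

variable {α E : Type*} [NormedAddCommGroup E] [NormedSpace ℝ E] {m m₀ : MeasurableSpace α}
  {μ : Measure[m₀] α}

theorem setIntegral_eq_of_isPiSystem (hm : m ≤ m₀) {P : Set (Set α)}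
    (h_gen : m = MeasurableSpace.generateFrom P) (hP : IsPiSystem P) {f g : α → E}
    (hf : Integrable f μ) (hg : Integrable g μ) (h_univ : ∫ x, f x ∂μ = ∫ x, g x ∂μ)
    (h_eq : ∀ s ∈ P, ∫ x in s, f x ∂μ = ∫ x in s, g x ∂μ) {s : Set α}
    (hs : MeasurableSet[m] s) : ∫ x in s, f x ∂μ = ∫ x in s, g x ∂μ := by
  induction s, hs using MeasurableSpace.induction_on_inter h_gen hP with
  | empty => simp
  | basic t ht => exact h_eq t ht
  | compl t ht h_t =>
    rw [setIntegral_compl (hm t ht) hf, setIntegral_compl (hm t ht) hg, h_univ, h_t]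
  | iUnion t h_disj ht h_t =>
    rw [integral_iUnion (fun i => hm _ (ht i)) h_disj hf.integrableOn,
      integral_iUnion (fun i => hm _ (ht i)) h_disj hg.integrableOn]
    exact tsum_congr h_t

end

lemma MeasurableSpace.sup_eq_generateFrom_inter {α : Type*} (m₁ m₂ : MeasurableSpace α) :
    m₁ ⊔ m₂ = generateFrom
      {t | ∃ s₁ s₂, MeasurableSet[m₁] s₁ ∧ MeasurableSet[m₂] s₂ ∧ s₁ ∩ s₂ = t} := by
  refine le_antisymm (sup_le ?_ ?_) (generateFrom_le ?_)
  · exact fun t ht => measurableSet_generateFrom ⟨t, Set.univ, ht, .univ, Set.inter_univ t⟩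
  · exact fun t ht => measurableSet_generateFrom ⟨Set.univ, t, .univ, ht, Set.univ_inter t⟩
  · rintro _ ⟨s₁, s₂, h₁, h₂, rfl⟩
    exact (le_sup_left (b := m₂) _ h₁).inter (le_sup_right (a := m₁) _ h₂)

lemma isPiSystem_inter_measurableSet {α : Type*} (m₁ m₂ : MeasurableSpace α) :
    IsPiSystem {t | ∃ s₁ s₂, MeasurableSet[m₁] s₁ ∧ MeasurableSet[m₂] s₂ ∧ s₁ ∩ s₂ = t} := by
  rintro _ ⟨s₁, s₂, h₁, h₂, rfl⟩ _ ⟨s₁', s₂', h₁', h₂', rfl⟩ -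
  exact ⟨s₁ ∩ s₁', s₂ ∩ s₂', h₁.inter h₁', h₂.inter h₂', Set.inter_inter_inter_comm _ _ _ _⟩

namespace ProbabilityTheory

variable {Ω : Type*} {mΩ : MeasurableSpace Ω} {μ : Measure Ω} {mA mC mD : MeasurableSpace Ω}

lemma Indep.setIntegral_inter_eq_mul [IsFiniteMeasure μ] (hA : mA ≤ mΩ) (hD : mD ≤ mΩ)
    (h_indep : Indep mA mD μ) {f : Ω → ℝ} (hf : StronglyMeasurable[mA] f)
    (hf_int : Integrable f μ) {c d : Set Ω} (hc : MeasurableSet[mA] c) (hd : MeasurableSet[mD] d) :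
    ∫ x in c ∩ d, f x ∂μ = (∫ x in c, f x ∂μ) * μ.real d := by
  have h_indepFun : IndepFun (c.indicator f) (d.indicator (1 : Ω → ℝ)) μ := by
    rw [IndepFun_iff_Indep]
    exact indep_of_indep_of_le_right (indep_of_indep_of_le_left h_indep
      (hf.measurable.indicator hc).comap_le) (measurable_const.indicator hd).comap_le
  calc ∫ x in c ∩ d, f x ∂μ = ∫ x, (c.indicator f * d.indicator (1 : Ω → ℝ)) x ∂μ := by
        rw [← integral_indicator ((hA _ hc).inter (hD _ hd))]
        congr 1 with x
        simpa using Set.inter_indicator_mul f (1 : Ω → ℝ) x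
    _ = (∫ x in c, f x ∂μ) * μ.real d := by
        rw [h_indepFun.integral_mul_eq_mul_integral
          (hf_int.indicator (hA _ hc)).aestronglyMeasurable
          ((integrable_const (1 : ℝ)).indicator (hD _ hd)).aestronglyMeasurable,
          integral_indicator (hA _ hc), integral_indicator_one (hD _ hd)]

lemma Indep.condExp_sup_eq [IsFiniteMeasure μ] (hCA : mC ≤ mA) (hA : mA ≤ mΩ) (hD : mD ≤ mΩ)
    (h_indep : Indep mA mD μ) {f : Ω → ℝ} (hf : StronglyMeasurable[mA] f) :
    μ[f | mC ⊔ mD] =ᵐ[μ] μ[f | mC] := by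
  by_cases hf_int : Integrable f μ
  swap
  · simp [condExp_of_not_integrable hf_int]
  have hC : mC ≤ mΩ := hCA.trans hA
  have hCD : mC ⊔ mD ≤ mΩ := sup_le hC hD
  refine (ae_eq_condExp_of_forall_setIntegral_eq hCD hf_int
    (fun _ _ _ => integrable_condExp.integrableOn) (fun s hs _ => ?_)
    (stronglyMeasurable_condExp.mono le_sup_left).aestronglyMeasurable).symm
  refine setIntegral_eq_of_isPiSystem hCD (MeasurableSpace.sup_eq_generateFrom_inter mC mD)
    (isPiSystem_inter_measurableSet mC mD) integrable_condExp hf_int (integral_condExp hC) ?_ hs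
  rintro _ ⟨c, d, hc, hd, rfl⟩
  rw [h_indep.setIntegral_inter_eq_mul hA hD (stronglyMeasurable_condExp.mono hCA)
      integrable_condExp (hCA _ hc) hd,
    h_indep.setIntegral_inter_eq_mul hA hD hf hf_int (hCA _ hc) hd,
    setIntegral_condExp hC hf_int hc]

lemma iIndep.condExp_condExp_iSup [IsFiniteMeasure μ] {ι : Type*} {m : ι → MeasurableSpace Ω}
    (h_le : ∀ i, m i ≤ mΩ) (h_indep : iIndep m μ) (S T : Set ι) (f : Ω → ℝ) :
    μ[μ[f | ⨆ i ∈ S, m i] | ⨆ i ∈ T, m i] =ᵐ[μ] μ[f | ⨆ i ∈ S ∩ T, m i] := by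
  have hS : ⨆ i ∈ S, m i ≤ mΩ := iSup₂_le fun i _ => h_le i
  have h_inter : ⨆ i ∈ S ∩ T, m i ≤ ⨆ i ∈ S, m i := biSup_mono fun _ => And.left
  have hT : ⨆ i ∈ T, m i = (⨆ i ∈ S ∩ T, m i) ⊔ ⨆ i ∈ T \ S, m i := by
    rw [← iSup_union, Set.inter_comm, Set.inter_union_sdiff]
  rw [hT]
  exact ((indep_iSup_of_disjoint h_le h_indep Set.disjoint_sdiff_right).condExp_sup_eq h_inter
    hS (iSup₂_le fun i _ => h_le i) stronglyMeasurable_condExp).trans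
    (condExp_condExp_of_le h_inter hS)

end ProbabilityTheory

theorem stmt1_general {Ω : Type*} [MeasurableSpace Ω] {d : ℕ} (μ : Measure Ω) [IsProbabilityMeasure μ]
    (ε : (Fin d → ℤ) → Ω → ℝ)
    (hmeas : ∀ j, Measurable (ε j))
    (hindep : iIndepFun ε μ)
    (Y : Ω → ℝ)
    (j k : Fin d → ℤ) :
    (μ[μ[Y | sigmaLe ε j] | sigmaLe ε k] =ᵐ[μ] μ[Y | sigmaLe ε (fun q => min (j q) (k q))]) ∧
    (μ[μ[Y | sigmaLe ε k] | sigmaLe ε j] =ᵐ[μ] μ[Y | sigmaLe ε (fun q => min (j q) (k q))]) := by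
  have h_commute (a b : Fin d → ℤ) :
      μ[μ[Y | sigmaLe ε a] | sigmaLe ε b] =ᵐ[μ] μ[Y | sigmaLe ε (a ⊓ b)] := by
    have := hindep.iIndep.condExp_condExp_iSup (fun i => (hmeas i).comap_le) (Set.Iic a)
      (Set.Iic b) Y
    rwa [Set.Iic_inter_Iic] at this
  refine ⟨h_commute j k, ?_⟩
  rw [show (fun q => min (j q) (k q)) = k ⊓ j from inf_comm j k]
  exact h_commute k j

/-- the filtration generated by an i.i.d. family `{ε_k}_{k ∈ ℤ^d}` is commuting:
`E[E(Y|F_j)|F_k] = E[E(Y|F_k)|F_j] = E(Y|F_{j ∧ k})` for integrable `Y` measurable with respect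
to `σ(ε_k : k ∈ ℤ^d)`. -/
theorem stmt1 {Ω : Type*} [MeasurableSpace Ω] {d : ℕ} (μ : Measure Ω) [IsProbabilityMeasure μ]
    (ε : (Fin d → ℤ) → Ω → ℝ)
    (hmeas : ∀ j, Measurable (ε j))
    (hindep : iIndepFun ε μ)
    (hident : ∀ j k, IdentDistrib (ε j) (ε k) μ μ)
    (Y : Ω → ℝ) (hYint : Integrable Y μ)
    (hYmeas : Measurable[⨆ k, MeasurableSpace.comap (ε k) inferInstance] Y)
    (j k : Fin d → ℤ) :
    (μ[μ[Y | sigmaLe ε j] | sigmaLe ε k] =ᵐ[μ] μ[Y | sigmaLe ε (fun q => min (j q) (k q))]) ∧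
    (μ[μ[Y | sigmaLe ε k] | sigmaLe ε j] =ᵐ[μ] μ[Y | sigmaLe ε (fun q => min (j q) (k q))]) :=
  stmt1_general μ ε hmeas hindep Y j k
end

section
/- Let {b_{n,j}}_{j in Z^d} be square-summable real coefficients with b_n = (sum_j b_{n,j}^2)^{1/2} > 0, such that for each canonical unit vector e_q, ||T_{e_q} b_n - b_n||_{l^2} / b_n -> 0 as n -> infinity. Then for every fixed j in Z^d, (1/b_n^2) * sum_{k in Z^d} b_{n,k} b_{n,k+j} -> 1 as n -> infinity. -/
/-!
Let `D_n(j) = ‖T_j b_n − b_n‖²`. Expanding the square gives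
`D_n(j) = 2 b_n² − 2 ∑_k b_{n,k} b_{n,k+j}`, so the claim is `D_n(j) / b_n² → 0`.
Translation invariance gives `D_n(−j) = D_n(j)` and `D_n(i + j) ≤ 2 D_n(i) + 2 D_n(j)`,
so the shifts `j` with `D_n(j) / b_n² → 0` form a subgroup of `ℤ^d`; by hypothesis it
contains the unit vectors, which generate `ℤ^d`.
-/

open Filter
open scoped Topology

section ShiftDefect

variable {G : Type*} [AddGroup G]

/-- `‖T_j f − f‖²` in `ℓ²(G)`. -/
noncomputable def shiftDefect (f : G → ℝ) (j : G) : ℝ := ∑' k, (f (k + j) - f k) ^ 2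

variable {f : G → ℝ}

lemma summable_sq_comp_add_right (hf : Summable fun k => f k ^ 2) (j : G) :
    Summable fun k => f (k + j) ^ 2 :=
  (Equiv.addRight j).summable_iff (f := fun k => f k ^ 2) |>.mpr hf

lemma tsum_sq_comp_add_right (j : G) : ∑' k, f (k + j) ^ 2 = ∑' k, f k ^ 2 :=
  (Equiv.addRight j).tsum_eq fun k => f k ^ 2

lemma summable_mul_comp_add_right (hf : Summable fun k => f k ^ 2) (j : G) :
    Summable fun k => f k * f (k + j) := by
  refine Summable.of_norm_bounded ((hf.add (summable_sq_comp_add_right hf j)).div_const 2)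
    fun k => ?_
  rw [Real.norm_eq_abs, abs_mul]
  nlinarith [sq_nonneg (|f k| - |f (k + j)|), sq_abs (f k), sq_abs (f (k + j))]

lemma summable_sq_sub_comp_add_right (hf : Summable fun k => f k ^ 2) (j : G) :
    Summable fun k => (f (k + j) - f k) ^ 2 :=
  (((summable_sq_comp_add_right hf j).add hf).sub
    ((summable_mul_comp_add_right hf j).mul_left 2)).congr fun k => by ring

lemma shiftDefect_eq (hf : Summable fun k => f k ^ 2) (j : G) :
    shiftDefect f j = 2 * ∑' k, f k ^ 2 - 2 * ∑' k, f k * f (k + j) := by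
  have hj := summable_sq_comp_add_right hf j
  have hfj := (summable_mul_comp_add_right hf j).mul_left 2
  calc shiftDefect f j = ∑' k, ((f (k + j) ^ 2 + f k ^ 2) - 2 * (f k * f (k + j))) :=
        tsum_congr fun k => by ring
    _ = _ := by
      rw [(hj.add hf).tsum_sub hfj, hj.tsum_add hf, tsum_mul_left, tsum_sq_comp_add_right]
      ring

lemma shiftDefect_zero : shiftDefect f 0 = 0 := by simp [shiftDefect]

lemma shiftDefect_neg (j : G) : shiftDefect f (-j) = shiftDefect f j := by
  rw [shiftDefect, ← (Equiv.addRight j).tsum_eq]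
  exact tsum_congr fun k => by simp only [Equiv.coe_addRight, add_neg_cancel_right]; ring

lemma shiftDefect_add_le (hf : Summable fun k => f k ^ 2) (i j : G) :
    shiftDefect f (i + j) ≤ 2 * shiftDefect f j + 2 * shiftDefect f i := by
  have hj : Summable fun k => (f (k + i + j) - f (k + i)) ^ 2 :=
    (Equiv.addRight i).summable_iff (f := fun k => (f (k + j) - f k) ^ 2) |>.mpr
      (summable_sq_sub_comp_add_right hf j)
  have hi := summable_sq_sub_comp_add_right hf i
  have hreindex : ∑' k, (f (k + i + j) - f (k + i)) ^ 2 = shiftDefect f j :=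
    (Equiv.addRight i).tsum_eq fun k => (f (k + j) - f k) ^ 2
  rw [← hreindex]
  unfold shiftDefect
  rw [← tsum_mul_left, ← tsum_mul_left, ← (hj.mul_left 2).tsum_add (hi.mul_left 2)]
  refine (summable_sq_sub_comp_add_right hf (i + j)).tsum_le_tsum (fun k => ?_)
    ((hj.mul_left 2).add (hi.mul_left 2))
  rw [← add_assoc]
  -- `(a + b)² ≤ 2a² + 2b²` with `a = f (k + i + j) - f (k + i)`, `b = f (k + i) - f k`
  nlinarith [sq_nonneg (f (k + i + j) - 2 * f (k + i) + f k)]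

end ShiftDefect

lemma tendsto_shiftDefect_div_of_mem_closure {G ι : Type*} [AddGroup G] {l : Filter ι}
    {f : ι → G → ℝ} (hf : ∀ n, Summable fun k => f n k ^ 2) {c : ι → ℝ} (hc : ∀ n, 0 ≤ c n)
    {S : Set G} (hS : ∀ s ∈ S, Tendsto (fun n => shiftDefect (f n) s / c n) l (𝓝 0))
    {j : G} (hj : j ∈ AddSubgroup.closure S) :
    Tendsto (fun n => shiftDefect (f n) j / c n) l (𝓝 0) := by
  induction hj using AddSubgroup.closure_induction with
  | mem s hs => exact hS s hs
  | zero => simp only [shiftDefect_zero, zero_div, tendsto_const_nhds]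
  | add i j _ _ hi hj =>
    have hbound := (hj.const_mul 2).add (hi.const_mul 2)
    rw [mul_zero, add_zero] at hbound
    refine squeeze_zero (fun n => div_nonneg (tsum_nonneg fun _ => sq_nonneg _) (hc n))
      (fun n => ?_) hbound
    rw [mul_div_assoc', mul_div_assoc', ← add_div]
    exact div_le_div_of_nonneg_right (shiftDefect_add_le (hf n) i j) (hc n)
  | neg j _ hj => simpa only [shiftDefect_neg] using hj

lemma mem_closure_range_single {d : ℕ} (j : Fin d → ℤ) :
    j ∈ AddSubgroup.closure (Set.range fun q => Pi.single q 1) := by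
  have hbasis : Set.range (Pi.basisFun ℤ (Fin d)) = Set.range fun q => Pi.single q 1 :=
    congrArg Set.range (funext (Pi.basisFun_apply ℤ (Fin d)))
  rw [← Submodule.span_int_eq_addSubgroupClosure, ← hbasis, Module.Basis.span_eq]
  exact AddSubgroup.mem_top j

/-- if the ℓ² coefficients `b_n` satisfy the unit-vector shift condition
`‖T_{e_q} b_n − b_n‖_{ℓ²}/b_n → 0`, then for every fixed `j`,
`(1/b_n²) ∑_k b_{n,k} b_{n,k+j} → 1`. -/
theorem stmt7 {d : ℕ} (b : ℕ → (Fin d → ℤ) → ℝ)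
    (hb : ∀ n, Summable fun j => (b n j) ^ 2)
    (hbpos : ∀ n, 0 < ∑' j, (b n j) ^ 2)
    (bn : ℕ → ℝ) (hbn : ∀ n, bn n = Real.sqrt (∑' j, (b n j) ^ 2))
    (hshift : ∀ q : Fin d,
      Tendsto (fun n =>
          Real.sqrt (∑' j, (b n (j + Pi.single q 1) - b n j) ^ 2) / bn n)
        atTop (𝓝 0)) :
    ∀ j : Fin d → ℤ,
      Tendsto (fun n => (∑' k, b n k * b n (k + j)) / (bn n) ^ 2) atTop (𝓝 1) := by
  have hbn_sq n : bn n ^ 2 = ∑' k, b n k ^ 2 := by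
    rw [hbn, Real.sq_sqrt (tsum_nonneg fun _ => sq_nonneg _)]
  have hunit q : Tendsto (fun n => shiftDefect (b n) (Pi.single q 1) / bn n ^ 2) atTop (𝓝 0) := by
    convert (hshift q).pow 2 using 2 with n
    · rw [div_pow, Real.sq_sqrt (tsum_nonneg fun _ => sq_nonneg _), shiftDefect]
    · norm_num
  intro j
  have hdefect := tendsto_shiftDefect_div_of_mem_closure hb (fun n => sq_nonneg (bn n))
    (by rintro _ ⟨q, rfl⟩; exact hunit q) (mem_closure_range_single j)
  have hratio n : (∑' k, b n k * b n (k + j)) / bn n ^ 2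
      = 1 - shiftDefect (b n) j / bn n ^ 2 / 2 := by
    rw [shiftDefect_eq (hb n), hbn_sq]
    field_simp [(hbpos n).ne']
    ring
  simpa only [hratio, zero_div, sub_zero] using (hdefect.div_const 2).const_sub 1
end

section
/- Let {epsilon_i}_{i in Z} be i.i.d. centered square-integrable random variables and X_i = epsilon_i - epsilon_{i-1}. Then there exists an increasing sequence of finite sets Gamma_n subset Z with |Gamma_n| -> infinity such that, writing S_{Gamma_n} = sum_{i in Gamma_n} X_i, sigma_n^2 = Var(S_{Gamma_n}), b_n^2 = |Gamma_n|, one has liminf_n sigma_n^2 / b_n^2 > 0 but sigma_n^2 / b_n^2 does not converge. -/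
/-!
Writing the sum as `∑_{i ∈ Γ} ε_i - ∑_{i ∈ Γ - 1} ε_i`, the terms indexed by `Γ ∩ (Γ - 1)` cancel,
so `Var(S_Γ) = E ε₀² · |Γ ∆ (Γ - 1)|`: the variance only sees the boundary of `Γ`. An isolated
point contributes `2` to the boundary and a block of consecutive integers only `2` in total.
Taking `Γ_n` to be `3^⌊n/2⌋ - 1` points spaced by two together with a block of
`3^⌊(n+1)/2⌋ + 1` consecutive integers, the ratio `Var(S_{Γ_n}) / |Γ_n|` is `E ε₀²` for even `n`
and `E ε₀² / 2` for odd `n`.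
-/

open MeasureTheory ProbabilityTheory Filter Finset
open scoped Topology symmDiff

theorem Finset.sum_sub_sum_eq_sum_symmDiff {ι M : Type*} [DecidableEq ι] [AddCommGroup M]
    (f : ι → M) (A B : Finset ι) :
    ∑ i ∈ A, f i - ∑ i ∈ B, f i = ∑ i ∈ A ∆ B, if i ∈ A then f i else -f i := by
  rw [Finset.symmDiff_def, sum_union disjoint_sdiff_sdiff, ← sum_sdiff_sub_sum_sdiff,
    sub_eq_add_neg, ← sum_neg_distrib]
  congr 1 <;> refine sum_congr rfl fun i hi => ?_ <;> simp_all [mem_sdiff]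

theorem Finset.card_symmDiff_add_two_mul_card_inter {α : Type*} [DecidableEq α]
    (A B : Finset α) : #(A ∆ B) + 2 * #(A ∩ B) = #A + #B := by
  rw [Finset.symmDiff_def, card_union_of_disjoint disjoint_sdiff_sdiff]
  have hA := card_sdiff_add_card_inter A B
  have hB := card_sdiff_add_card_inter B A
  rw [inter_comm B A] at hB
  omega

/-- `j ∈ boundary Γ` iff exactly one of `j`, `j + 1` lies in `Γ`. -/
def boundary (Γ : Finset ℤ) : Finset ℤ := Γ ∆ Γ.map (Equiv.subRight 1).toEmbedding

lemma card_boundary_add_two_mul (Γ : Finset ℤ) :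
    #(boundary Γ) + 2 * #(Γ.filter (· + 1 ∈ Γ)) = 2 * #Γ := by
  have h := card_symmDiff_add_two_mul_card_inter Γ (Γ.map (Equiv.subRight 1).toEmbedding)
  have hinter : Γ ∩ Γ.map (Equiv.subRight 1).toEmbedding = Γ.filter (· + 1 ∈ Γ) := by
    ext j
    simp
  rw [card_map, hinter] at h
  rw [boundary]
  omega

section Variance

variable {Ω ι : Type*} [MeasurableSpace Ω] {μ : Measure Ω}

theorem variance_sum_sub_sum [DecidableEq ι] {X : ι → Ω → ℝ} {v : ℝ}
    (hX : ∀ i, MemLp (X i) 2 μ) (hvar : ∀ i, variance (X i) μ = v)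
    (hindep : Pairwise fun i j => IndepFun (X i) (X j) μ) (A B : Finset ι) :
    variance (fun ω => ∑ i ∈ A, X i ω - ∑ i ∈ B, X i ω) μ = #(A ∆ B) * v := by
  set s : ι → ℝ := fun i => if i ∈ A then 1 else -1
  have hsum : (fun ω => ∑ i ∈ A, X i ω - ∑ i ∈ B, X i ω) = ∑ i ∈ A ∆ B, fun ω => s i * X i ω := by
    ext ω
    rw [sum_sub_sum_eq_sum_symmDiff, Finset.sum_apply]
    refine sum_congr rfl fun i _ => ?_
    split_ifs <;> simp [s, *]
  have hs (i : ι) : s i ^ 2 = 1 := by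
    simp only [s]
    split_ifs <;> norm_num
  rw [hsum, IndepFun.variance_sum (fun i _ => (hX i).const_mul _)
    fun i _ j _ hij => (hindep hij).comp (measurable_const_mul _) (measurable_const_mul _)]
  simp [variance_const_mul, hs, hvar]

theorem variance_sum_sub_shift_eq_card_boundary_mul {X : ℤ → Ω → ℝ} {v : ℝ}
    (hX : ∀ i, MemLp (X i) 2 μ) (hvar : ∀ i, variance (X i) μ = v)
    (hindep : Pairwise fun i j => IndepFun (X i) (X j) μ) (Γ : Finset ℤ) :
    variance (fun ω => ∑ i ∈ Γ, (X i ω - X (i - 1) ω)) μ = #(boundary Γ) * v := by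
  simp_rw [sum_sub_distrib]
  rw [boundary, ← variance_sum_sub_sum hX hvar hindep]
  simp [sum_map]

end Variance

noncomputable def spacedUnionBlock (p q : ℕ) : Finset ℤ :=
  (range p).image (fun j : ℕ => -2 * (j : ℤ) - 2) ∪ Icc 1 (q : ℤ)

lemma mem_spacedUnionBlock {p q : ℕ} {j : ℤ} :
    j ∈ spacedUnionBlock p q ↔ (j % 2 = 0 ∧ -2 * (p : ℤ) ≤ j ∧ j ≤ -2) ∨ (1 ≤ j ∧ j ≤ q) := by
  simp only [spacedUnionBlock, mem_union, mem_image, mem_range, mem_Icc]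
  constructor
  · rintro (⟨i, hi, rfl⟩ | h) <;> omega
  · rintro (h | h)
    · exact .inl ⟨(-(j + 2) / 2).toNat, by omega, by omega⟩
    · exact .inr h

lemma card_spacedUnionBlock (p q : ℕ) : #(spacedUnionBlock p q) = p + q := by
  rw [spacedUnionBlock, card_union_of_disjoint, card_image_of_injective _ (fun a b h => by simp_all),
    card_range, Int.card_Icc]
  · omega
  · rw [disjoint_left]
    simp only [mem_image, mem_range, mem_Icc]
    omega

lemma card_boundary_spacedUnionBlock (p : ℕ) {q : ℕ} (hq : 0 < q) :
    #(boundary (spacedUnionBlock p q)) = 2 * p + 2 := by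
  have h := card_boundary_add_two_mul (spacedUnionBlock p q)
  have hpairs :
      (spacedUnionBlock p q).filter (· + 1 ∈ spacedUnionBlock p q) = Icc 1 ((q : ℤ) - 1) := by
    ext j
    simp only [mem_filter, mem_spacedUnionBlock, mem_Icc]
    omega
  rw [hpairs, Int.card_Icc, card_spacedUnionBlock] at h
  omega

lemma spacedUnionBlock_mono {p p' q q' : ℕ} (hp : p ≤ p') (hq : q ≤ q') :
    spacedUnionBlock p q ⊆ spacedUnionBlock p' q' :=
  union_subset_union (image_subset_image (range_subset_range.mpr hp))
    (Icc_subset_Icc le_rfl (by exact_mod_cast hq))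

noncomputable def oscillatingSets (n : ℕ) : Finset ℤ :=
  spacedUnionBlock (3 ^ (n / 2) - 1) (3 ^ ((n + 1) / 2) + 1)

lemma card_oscillatingSets (n : ℕ) :
    #(oscillatingSets n) = 3 ^ (n / 2) + 3 ^ ((n + 1) / 2) := by
  have := Nat.one_le_pow (n / 2) 3 three_pos
  rw [oscillatingSets, card_spacedUnionBlock]
  omega

lemma card_boundary_oscillatingSets (n : ℕ) :
    #(boundary (oscillatingSets n)) = 2 * 3 ^ (n / 2) := by
  have := Nat.one_le_pow (n / 2) 3 three_pos
  rw [oscillatingSets, card_boundary_spacedUnionBlock _ (Nat.succ_pos _)]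
  omega

lemma oscillatingSets_subset_succ (n : ℕ) : oscillatingSets n ⊆ oscillatingSets (n + 1) :=
  spacedUnionBlock_mono (Nat.sub_le_sub_right (Nat.pow_le_pow_right three_pos (by omega)) 1)
    (Nat.add_le_add_right (Nat.pow_le_pow_right three_pos (by omega)) 1)

lemma tendsto_card_oscillatingSets :
    Tendsto (fun n => (#(oscillatingSets n) : ℝ)) atTop atTop := by
  refine tendsto_natCast_atTop_atTop.comp (StrictMono.tendsto_atTop <| strictMono_nat_of_lt_succ
    fun n => ?_)
  rw [card_oscillatingSets, card_oscillatingSets, show (n + 1 + 1) / 2 = n / 2 + 1 by omega]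
  have := Nat.pow_lt_pow_right (by norm_num : 1 < 3) (show n / 2 < n / 2 + 1 by omega)
  have := Nat.pow_le_pow_right three_pos (show n / 2 ≤ (n + 1) / 2 by omega)
  omega

lemma card_boundary_div_card_oscillatingSets (n : ℕ) :
    (#(boundary (oscillatingSets n)) : ℝ) / #(oscillatingSets n)
      = if Even n then 1 else 1 / 2 := by
  rw [card_boundary_oscillatingSets, card_oscillatingSets]
  obtain ⟨k, rfl | rfl⟩ := Nat.even_or_odd' n
  · rw [if_pos (even_two_mul k), show (2 * k + 1) / 2 = 2 * k / 2 by omega]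
    push_cast
    field_simp
    ring
  · rw [if_neg (Nat.not_even_iff_odd.mpr (odd_two_mul_add_one k)),
      show (2 * k + 1 + 1) / 2 = (2 * k + 1) / 2 + 1 by omega]
    push_cast
    field_simp
    ring

lemma min_le_liminf_ite_even (a b : ℝ) :
    min a b ≤ liminf (fun n : ℕ => if Even n then a else b) atTop := by
  refine le_liminf_of_le (isBoundedUnder_of ⟨max a b, fun n => ?_⟩).isCoboundedUnder_ge
    (Eventually.of_forall fun n => ?_) <;> split_ifs <;> simp

lemma not_tendsto_ite_even {a b : ℝ} (hab : a ≠ b) (L : ℝ) :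
    ¬ Tendsto (fun n : ℕ => if Even n then a else b) atTop (𝓝 L) := by
  intro h
  have heven := h.comp (strictMono_mul_left_of_pos two_pos).tendsto_atTop
  have hodd := h.comp
    (show StrictMono fun k : ℕ => 2 * k + 1 from fun _ _ h => by dsimp only; omega).tendsto_atTop
  simp only [Function.comp_def, even_two_mul, Nat.not_even_two_mul_add_one, if_true, if_false,
    tendsto_const_nhds_iff] at heven hodd
  exact hab (heven.trans hodd.symm)

theorem stmt14_general {Ω : Type*} [MeasurableSpace Ω] (μ : Measure Ω)
    (ε : ℤ → Ω → ℝ)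
    (hindep : iIndepFun ε μ)
    (hident : ∀ j k, IdentDistrib (ε j) (ε k) μ μ)
    (hcent : ∫ ω, ε 0 ω ∂μ = 0)
    (hL2 : MemLp (ε 0) 2 μ)
    (hnondeg : 0 < ∫ ω, (ε 0 ω) ^ 2 ∂μ) :
    ∃ Γ : ℕ → Finset ℤ,
      (∀ n, Γ n ⊆ Γ (n + 1)) ∧
      Tendsto (fun n => ((Γ n).card : ℝ)) atTop atTop ∧
      0 < Filter.liminf (fun n =>
          variance (fun ω => ∑ i ∈ Γ n, (ε i ω - ε (i - 1) ω)) μ / ((Γ n).card : ℝ)) atTop ∧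
      ¬ ∃ L : ℝ, Tendsto (fun n =>
          variance (fun ω => ∑ i ∈ Γ n, (ε i ω - ε (i - 1) ω)) μ / ((Γ n).card : ℝ))
        atTop (𝓝 L) := by
  set σ2 := ∫ ω, (ε 0 ω) ^ 2 ∂μ
  have hvar (i : ℤ) : variance (ε i) μ = σ2 := by
    rw [(hident i 0).variance_eq, variance_of_integral_eq_zero hL2.aemeasurable hcent]
  have hratio (n : ℕ) :
      variance (fun ω => ∑ i ∈ oscillatingSets n, (ε i ω - ε (i - 1) ω)) μ
        / #(oscillatingSets n) = if Even n then σ2 else σ2 / 2 := by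
    rw [variance_sum_sub_shift_eq_card_boundary_mul (fun i => (hident 0 i).memLp_snd hL2) hvar
      (fun i j hij => hindep.indepFun hij), mul_div_right_comm,
      card_boundary_div_card_oscillatingSets]
    split_ifs <;> ring
  refine ⟨oscillatingSets, oscillatingSets_subset_succ, tendsto_card_oscillatingSets, ?_, ?_⟩
  · simp_rw [hratio]
    exact (lt_min hnondeg (half_pos hnondeg)).trans_le (min_le_liminf_ite_even _ _)
  · simp_rw [hratio]
    exact fun ⟨L, hL⟩ => not_tendsto_ite_even (half_lt_self hnondeg).ne' L hL

/-- Example 2: for the one-dependent field `X_i = ε_i − ε_{i−1}` built from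
non-degenerate i.i.d. centered square-integrable variables, there is an increasing sequence of
finite sets `Γ_n ⊆ ℤ` with `|Γ_n| → ∞` such that `liminf σ_n²/|Γ_n| > 0` but `σ_n²/|Γ_n|`
does not converge, where `σ_n² = Var(∑_{i ∈ Γ_n} X_i)`. -/
theorem stmt14 {Ω : Type*} [MeasurableSpace Ω] (μ : Measure Ω) [IsProbabilityMeasure μ]
    (ε : ℤ → Ω → ℝ)
    (hmeas : ∀ j, Measurable (ε j))
    (hindep : iIndepFun ε μ)
    (hident : ∀ j k, IdentDistrib (ε j) (ε k) μ μ)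
    (hcent : ∫ ω, ε 0 ω ∂μ = 0)
    (hL2 : MemLp (ε 0) 2 μ)
    (hnondeg : 0 < ∫ ω, (ε 0 ω) ^ 2 ∂μ) :
    ∃ Γ : ℕ → Finset ℤ,
      (∀ n, Γ n ⊆ Γ (n + 1)) ∧
      Tendsto (fun n => ((Γ n).card : ℝ)) atTop atTop ∧
      0 < Filter.liminf (fun n =>
          variance (fun ω => ∑ i ∈ Γ n, (ε i ω - ε (i - 1) ω)) μ / ((Γ n).card : ℝ)) atTop ∧
      ¬ ∃ L : ℝ, Tendsto (fun n =>
          variance (fun ω => ∑ i ∈ Γ n, (ε i ω - ε (i - 1) ω)) μ / ((Γ n).card : ℝ))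
        atTop (𝓝 L) :=
  stmt14_general μ ε hindep hident hcent hL2 hnondeg
end
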